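/- arXiv:2205.09094 — 3 statements merged into one kernel-verified Lean document; each statement's English description precedes it below -/
import Mathlib

section
/- Let V₁, V₂ be real-valued random variables on a common probability space with CDFs F₁ and F₂. Then for every δ ∈ ℝ, P(V₁ - V₂ ≤ δ) ≥ max(sup_u {F₁(u + δ/2) - F₂(u - δ/2)}, 0). -/
/-!
If `V₁ ≤ u + δ/2` then either `V₂ ≤ u - δ/2` or `V₁ - V₂ ≤ δ`, so by subadditivity
`F₁(u + δ/2) ≤ F₂(u - δ/2) + P(V₁ - V₂ ≤ δ)` for every `u`; taking the supremum over `u`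
(and using that probabilities are nonnegative) gives the bound.
-/

open MeasureTheory

section

variable {Ω : Type*} {X Y : Ω → ℝ} {a b c : ℝ}

lemma setOf_le_subset_union_sub_le (h : a ≤ b + c) :
    {ω | X ω ≤ a} ⊆ {ω | Y ω ≤ b} ∪ {ω | X ω - Y ω ≤ c} := by
  intro ω (hX : X ω ≤ a)
  by_cases hY : Y ω ≤ b
  · exact Or.inl hY
  · exact Or.inr (show X ω - Y ω ≤ c by linarith [not_le.mp hY])

lemma measureReal_le_le_add_measureReal_sub_le [MeasurableSpace Ω] (μ : Measure Ω)
    [IsFiniteMeasure μ] (h : a ≤ b + c) :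
    μ.real {ω | X ω ≤ a} ≤ μ.real {ω | Y ω ≤ b} + μ.real {ω | X ω - Y ω ≤ c} :=
  (measureReal_mono (setOf_le_subset_union_sub_le h)).trans (measureReal_union_le _ _)

end

theorem makarov_lower_bound_general {Ω : Type*} [MeasurableSpace Ω] (μ : Measure Ω)
    [IsProbabilityMeasure μ] (V1 V2 : Ω → ℝ)
    (δ : ℝ) :
    max (⨆ u, ((μ {ω | V1 ω ≤ u + δ/2}).toReal - (μ {ω | V2 ω ≤ u - δ/2}).toReal)) 0
      ≤ (μ {ω | V1 ω - V2 ω ≤ δ}).toReal := by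
  refine max_le (ciSup_le fun u => ?_) ENNReal.toReal_nonneg
  have key := measureReal_le_le_add_measureReal_sub_le μ (X := V1) (Y := V2)
    (show u + δ / 2 ≤ u - δ / 2 + δ by linarith)
  simp only [Measure.real] at key
  linarith

/-- Makarov lower bound: for real random variables `V₁, V₂` with CDFs `F₁, F₂`, for every `δ`,
`P(V₁ - V₂ ≤ δ) ≥ max(sup_u {F₁(u+δ/2) - F₂(u-δ/2)}, 0)`. -/
theorem makarov_lower_bound {Ω : Type*} [MeasurableSpace Ω] (μ : Measure Ω)
    [IsProbabilityMeasure μ] (V1 V2 : Ω → ℝ) (hV1 : Measurable V1) (hV2 : Measurable V2)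
    (δ : ℝ) :
    max (⨆ u, ((μ {ω | V1 ω ≤ u + δ/2}).toReal - (μ {ω | V2 ω ≤ u - δ/2}).toReal)) 0
      ≤ (μ {ω | V1 ω - V2 ω ≤ δ}).toReal :=
  makarov_lower_bound_general μ V1 V2 δ
end

section
/- Let V₁, V₂ be real-valued random variables on a common probability space with CDFs F₁ and F₂. Then for every δ ∈ ℝ, P(V₁ - V₂ ≤ δ) ≤ 1 + min(inf_u {F₁(u + δ/2) - F₂(u - δ/2)}, 0). -/
/-!
Fréchet's inequality `P(A) + P(C) ≤ 1 + P(A ∩ C)` applied to `A = {V₁ - V₂ ≤ δ}` and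
`C = {V₂ ≤ u - δ/2}`: on `A ∩ C` one has `V₁ ≤ V₂ + δ ≤ u + δ/2`, so
`P(V₁ - V₂ ≤ δ) ≤ 1 + F₁(u + δ/2) - F₂(u - δ/2)` for every `u`; the bound by `1` is trivial.
-/

open MeasureTheory

theorem measureReal_add_le_one_add_of_inter_subset {Ω : Type*} [MeasurableSpace Ω]
    {μ : Measure Ω} [IsZeroOrProbabilityMeasure μ] {A B C : Set Ω} (hC : MeasurableSet C)
    (hACB : A ∩ C ⊆ B) : μ.real A + μ.real C ≤ 1 + μ.real B :=
  calc μ.real A + μ.real C = μ.real (A ∪ C) + μ.real (A ∩ C) :=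
        (measureReal_union_add_inter hC).symm
    _ ≤ 1 + μ.real B := add_le_add measureReal_le_one (measureReal_mono hACB)

theorem setOf_sub_le_inter_setOf_le_subset {Ω : Type*} (V1 V2 : Ω → ℝ) (δ u : ℝ) :
    {ω | V1 ω - V2 ω ≤ δ} ∩ {ω | V2 ω ≤ u - δ / 2} ⊆ {ω | V1 ω ≤ u + δ / 2} := by
  rintro ω ⟨hdiff, hV2⟩
  change V1 ω - V2 ω ≤ δ at hdiff
  change V2 ω ≤ u - δ / 2 at hV2
  change V1 ω ≤ u + δ / 2
  linarith

theorem makarov_upper_bound_general {Ω : Type*} [MeasurableSpace Ω] (μ : Measure Ω)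
    [IsProbabilityMeasure μ] (V1 V2 : Ω → ℝ) (hV2 : Measurable V2)
    (δ : ℝ) :
    (μ {ω | V1 ω - V2 ω ≤ δ}).toReal
      ≤ 1 + min (⨅ u, ((μ {ω | V1 ω ≤ u + δ/2}).toReal - (μ {ω | V2 ω ≤ u - δ/2}).toReal)) 0 := by
  simp only [← measureReal_def]
  rw [← sub_le_iff_le_add']
  refine le_min (le_ciInf fun u => ?_) (sub_nonpos.2 measureReal_le_one)
  have := measureReal_add_le_one_add_of_inter_subset (μ := μ)
    (measurableSet_le hV2 measurable_const)
    (setOf_sub_le_inter_setOf_le_subset V1 V2 δ u)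
  linarith

/-- Makarov upper bound: for real random variables `V₁, V₂` with CDFs `F₁, F₂`, for every `δ`,
`P(V₁ - V₂ ≤ δ) ≤ 1 + min(inf_u {F₁(u+δ/2) - F₂(u-δ/2)}, 0)`. -/
theorem makarov_upper_bound {Ω : Type*} [MeasurableSpace Ω] (μ : Measure Ω)
    [IsProbabilityMeasure μ] (V1 V2 : Ω → ℝ) (hV1 : Measurable V1) (hV2 : Measurable V2)
    (δ : ℝ) :
    (μ {ω | V1 ω - V2 ω ≤ δ}).toReal
      ≤ 1 + min (⨅ u, ((μ {ω | V1 ω ≤ u + δ/2}).toReal - (μ {ω | V2 ω ≤ u - δ/2}).toReal)) 0 :=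
  makarov_upper_bound_general μ V1 V2 hV2 δ
end

section
/- Let V₁, V₂ be real-valued random variables and F₁, F₂ their CDFs. Then θ^L(δ) := -min(inf_u {F₁(u+δ/2) - F₂(u-δ/2)}, 0) and θ^U(δ) := 1 - max(sup_u {F₁(u+δ/2) - F₂(u-δ/2)}, 0) satisfy θ^L(δ) ≤ P(V₁ - V₂ > δ) ≤ θ^U(δ) for every δ ∈ ℝ. -/
/-!
The difference of the two CDFs at points `x`, `y` with `x - y = δ` is controlled by the
probability of `V₁ - V₂ > δ` through the inclusions
`{V₂ ≤ y} ⊆ {V₁ ≤ x} ∪ {V₁ - V₂ > δ}` and `{V₁ ≤ x} ⊆ {V₂ ≤ y} ∪ {V₁ - V₂ ≤ δ}`;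
taking the infimum, resp. supremum, over `u` with `x = u + δ/2`, `y = u - δ/2` gives the bounds. -/

open MeasureTheory

/-- Makarov bounds on the survival function of a difference. -/
noncomputable def thetaL (F1 F0 : ℝ → ℝ) (δ : ℝ) : ℝ :=
  -(min (⨅ y, (F1 (y + δ/2) - F0 (y - δ/2))) 0)

noncomputable def thetaU (F1 F0 : ℝ → ℝ) (δ : ℝ) : ℝ :=
  1 - max (⨆ y, (F1 (y + δ/2) - F0 (y - δ/2))) 0

lemma thetaL_le_of_forall {F1 F0 : ℝ → ℝ} {δ p : ℝ} (hp : 0 ≤ p)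
    (h : ∀ u, -p ≤ F1 (u + δ/2) - F0 (u - δ/2)) : thetaL F1 F0 δ ≤ p := by
  rw [thetaL, neg_le]
  exact le_min (le_ciInf h) (neg_nonpos.mpr hp)

lemma le_thetaU_of_forall {F1 F0 : ℝ → ℝ} {δ p : ℝ} (hp : p ≤ 1)
    (h : ∀ u, F1 (u + δ/2) - F0 (u - δ/2) ≤ 1 - p) : p ≤ thetaU F1 F0 δ := by
  rw [thetaU, le_sub_comm]
  exact max_le (ciSup_le h) (sub_nonneg.mpr hp)

section

variable {Ω : Type*} [MeasurableSpace Ω] {μ : Measure Ω} {V1 V2 : Ω → ℝ} {x y δ : ℝ}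

lemma measureReal_le_add_measureReal_lt_sub [IsFiniteMeasure μ] (h : δ ≤ x - y) :
    μ.real {ω | V2 ω ≤ y} ≤ μ.real {ω | V1 ω ≤ x} + μ.real {ω | δ < V1 ω - V2 ω} := by
  refine (measureReal_mono fun ω (hω : V2 ω ≤ y) => ?_).trans (measureReal_union_le _ _)
  by_cases hx : V1 ω ≤ x
  · exact Or.inl hx
  · exact Or.inr (show δ < V1 ω - V2 ω by linarith [not_le.mp hx])

lemma measureReal_le_add_measureReal_sub_le [IsFiniteMeasure μ] (h : x - y ≤ δ) :
    μ.real {ω | V1 ω ≤ x} ≤ μ.real {ω | V2 ω ≤ y} + μ.real {ω | V1 ω - V2 ω ≤ δ} := by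
  refine (measureReal_mono fun ω (hω : V1 ω ≤ x) => ?_).trans (measureReal_union_le _ _)
  by_cases hy : V2 ω ≤ y
  · exact Or.inl hy
  · exact Or.inr (show V1 ω - V2 ω ≤ δ by linarith [not_le.mp hy])

lemma probReal_sub_le_eq_one_sub [IsProbabilityMeasure μ] (hV1 : Measurable V1)
    (hV2 : Measurable V2) :
    μ.real {ω | V1 ω - V2 ω ≤ δ} = 1 - μ.real {ω | δ < V1 ω - V2 ω} := by
  have hD : MeasurableSet {ω | δ < V1 ω - V2 ω} := measurableSet_lt measurable_const (hV1.sub hV2)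
  rw [← probReal_compl_eq_one_sub hD]
  congr 1
  ext ω
  simp only [Set.mem_ofPred_eq, Set.mem_compl_iff, not_lt]

end

/-- For real random variables `V₁, V₂` with CDFs `F₁, F₂`, for every `δ`,
`θ^L(δ) ≤ P(V₁ - V₂ > δ) ≤ θ^U(δ)` where `θ^L, θ^U` are the Makarov bounds
for the survival function of `V₁ - V₂`. -/
theorem makarov_bounds_survival {Ω : Type*} [MeasurableSpace Ω] (μ : Measure Ω)
    [IsProbabilityMeasure μ] (V1 V2 : Ω → ℝ) (hV1 : Measurable V1) (hV2 : Measurable V2)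
    (δ : ℝ) :
    thetaL (fun v => (μ {ω | V1 ω ≤ v}).toReal) (fun v => (μ {ω | V2 ω ≤ v}).toReal) δ
        ≤ (μ {ω | δ < V1 ω - V2 ω}).toReal ∧
      (μ {ω | δ < V1 ω - V2 ω}).toReal
        ≤ thetaU (fun v => (μ {ω | V1 ω ≤ v}).toReal) (fun v => (μ {ω | V2 ω ≤ v}).toReal) δ := by
  simp only [← measureReal_def]
  have hshift (u : ℝ) : u + δ / 2 - (u - δ / 2) = δ := by ring
  constructor
  · refine thetaL_le_of_forall measureReal_nonneg fun u => ?_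
    exact neg_le_sub_iff_le_add.mpr (measureReal_le_add_measureReal_lt_sub (hshift u).ge)
  · refine le_thetaU_of_forall measureReal_le_one fun u => ?_
    rw [sub_le_iff_le_add', ← probReal_sub_le_eq_one_sub hV1 hV2]
    exact measureReal_le_add_measureReal_sub_le (hshift u).le
end
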